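/- arXiv:1810.08407 — 4 statements merged into one kernel-verified Lean document; each statement's English description precedes it below -/
import Mathlib

section
/- Let f(x) be a monic polynomial of degree n ≥ 3 with distinct real roots α_1,…,α_n, and let F(x,y) = y^n f(x/y) be the associated binary form. Let 0 < η < 1 and A = min_{i≠j} |α_i − α_j|. Suppose x, y ∈ ℤ with y ≠ 0 satisfy |α_{i₀} − x/y| ≤ d/|y|^n for some index i₀ and some d > 0. If |y| ≥ (d/(ηA))^{1/n}, then |F(x,y)| ≤ d(1+η)^{n−1} ∏_{j≠i₀} |α_j − α_{i₀}|. -/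
/-!
Write `β = x / y`. Then `F(x, y) = yⁿ ∏ⱼ (β - αⱼ)`, and the size condition on `|y|` makes the
approximation error `ε = |α_{i₀} - β| ≤ d / |y|ⁿ` at most `η A`, hence at most `η |αⱼ - α_{i₀}|` for
every `j ≠ i₀`. So each factor with `j ≠ i₀` is at most `(1 + η) |αⱼ - α_{i₀}|`, while the factor
`j = i₀` is `ε`, and `|y|ⁿ ε ≤ d`.
-/

open Finset

lemma le_pow_of_rpow_one_div_le {a b : ℝ} {n : ℕ} (ha : 0 ≤ a) (hn : n ≠ 0)
    (h : a ^ ((1 : ℝ) / n) ≤ b) : a ≤ b ^ n := by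
  rw [one_div] at h
  calc a = (a ^ (n⁻¹ : ℝ)) ^ n := (Real.rpow_inv_natCast_pow ha hn).symm
    _ ≤ b ^ n := pow_le_pow_left₀ (by positivity) h n

lemma abs_sub_le_one_add_mul_of_abs_sub_le {a b c η : ℝ} (h : |c - b| ≤ η * |a - b|) :
    |c - a| ≤ (1 + η) * |a - b| := by
  calc |c - a| ≤ |c - b| + |b - a| := abs_sub_le c b a
    _ ≤ (1 + η) * |a - b| := by rw [abs_sub_comm b a]; linarith

lemma prod_sub_mul_eq_pow_mul_prod_div_sub {ι K : Type*} [Fintype ι] [Field K] (α : ι → K)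
    (x : K) {y : K} (hy : y ≠ 0) :
    ∏ j, (x - α j * y) = y ^ Fintype.card ι * ∏ j, (x / y - α j) := by
  rw [← card_univ, ← prod_const, ← prod_mul_distrib]
  refine prod_congr rfl fun j _ => ?_
  field_simp

lemma abs_prod_sub_le_of_abs_sub_le {ι : Type*} [Fintype ι] [DecidableEq ι] (α : ι → ℝ) (i₀ : ι)
    {β η : ℝ} (h : ∀ j ≠ i₀, |β - α i₀| ≤ η * |α j - α i₀|) :
    |∏ j, (β - α j)| ≤
      |β - α i₀| * ((1 + η) ^ (Fintype.card ι - 1) * ∏ j ∈ univ.erase i₀, |α j - α i₀|) := by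
  rw [abs_prod, ← mul_prod_erase univ _ (mem_univ i₀)]
  gcongr
  calc ∏ j ∈ univ.erase i₀, |β - α j| ≤ ∏ j ∈ univ.erase i₀, (1 + η) * |α j - α i₀| :=
        prod_le_prod (fun _ _ => abs_nonneg _)
          fun j hj => abs_sub_le_one_add_mul_of_abs_sub_le (h j (ne_of_mem_erase hj))
    _ = (1 + η) ^ (Fintype.card ι - 1) * ∏ j ∈ univ.erase i₀, |α j - α i₀| := by
        rw [prod_mul_distrib, prod_const, card_erase_of_mem (mem_univ i₀), card_univ]

theorem stmt0_general (n : ℕ) (α : Fin n → ℝ) (hα : Function.Injective α)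
    (η A d : ℝ) (hη : 0 < η)
    (hA : IsLeast {r : ℝ | ∃ i j : Fin n, i ≠ j ∧ r = |α i - α j|} A)
    (x y : ℤ) (hy : y ≠ 0) (i₀ : Fin n)
    (happrox : |α i₀ - (x : ℝ) / y| ≤ d / |(y : ℝ)| ^ n)
    (hylarge : (d / (η * A)) ^ ((1 : ℝ) / n) ≤ |(y : ℝ)|) :
    |∏ j, ((x : ℝ) - α j * y)| ≤
      d * (1 + η) ^ (n - 1) * ∏ j ∈ univ.erase i₀, |α j - α i₀| := by
  obtain ⟨⟨i, j, hij, rfl⟩, hA_le⟩ := hA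
  have hA_pos : 0 < |α i - α j| := abs_pos.mpr (sub_ne_zero.mpr (hα.ne hij))
  have hyn : 0 < |(y : ℝ)| ^ n := by positivity
  have hd : 0 ≤ d := by simpa using (le_div_iff₀ hyn).mp ((abs_nonneg _).trans happrox)
  have hε : d / |(y : ℝ)| ^ n ≤ η * |α i - α j| := by
    rw [div_le_iff₀ hyn, mul_comm, ← div_le_iff₀ (by positivity)]
    exact le_pow_of_rpow_one_div_le (by positivity) i.pos.ne' hylarge
  have hclose : ∀ k ≠ i₀, |(x : ℝ) / y - α i₀| ≤ η * |α k - α i₀| := fun k hk =>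
    calc |(x : ℝ) / y - α i₀| ≤ d / |(y : ℝ)| ^ n := by rwa [abs_sub_comm]
      _ ≤ η * |α i - α j| := hε
      _ ≤ η * |α k - α i₀| := mul_le_mul_of_nonneg_left (hA_le ⟨k, i₀, hk, rfl⟩) hη.le
  calc |∏ j, ((x : ℝ) - α j * y)| = |(y : ℝ)| ^ n * |∏ j, ((x : ℝ) / y - α j)| := by
        rw [prod_sub_mul_eq_pow_mul_prod_div_sub _ _ (Int.cast_ne_zero.mpr hy), abs_mul, abs_pow,
          Fintype.card_fin]
    _ ≤ |(y : ℝ)| ^ n * (d / |(y : ℝ)| ^ n *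
          ((1 + η) ^ (n - 1) * ∏ j ∈ univ.erase i₀, |α j - α i₀|)) := by
        grw [abs_prod_sub_le_of_abs_sub_le α i₀ hclose, Fintype.card_fin, abs_sub_comm, happrox]
    _ = d * (1 + η) ^ (n - 1) * ∏ j ∈ univ.erase i₀, |α j - α i₀| := by
        field_simp

theorem stmt0 (n : ℕ) (hn : 3 ≤ n) (α : Fin n → ℝ) (hα : Function.Injective α)
    (η A d : ℝ) (hη : 0 < η) (hη1 : η < 1) (hd : 0 < d)
    (hA : IsLeast {r : ℝ | ∃ i j : Fin n, i ≠ j ∧ r = |α i - α j|} A)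
    (x y : ℤ) (hy : y ≠ 0) (i₀ : Fin n)
    (happrox : |α i₀ - (x : ℝ) / y| ≤ d / |(y : ℝ)| ^ n)
    (hylarge : (d / (η * A)) ^ ((1 : ℝ) / n) ≤ |(y : ℝ)|) :
    |∏ j, ((x : ℝ) - α j * y)| ≤
      d * (1 + η) ^ (n - 1) * ∏ j ∈ univ.erase i₀, |α j - α i₀| :=
  stmt0_general n α hα η A d hη hA x y hy i₀ happrox hylarge
end

section
/- With the notation of the previous context (β_j = x − α_j y, i₀ minimizing |β_j|, |F(x,y)| ≤ K, |y| ≥ K^{1/n}/(εA)), one has |β_{i₀}| ≤ c/|y|^{n−1}, where c = K/((1−ε)^{n−1} ∏_{j≠i₀} |α_j − α_{i₀}|). -/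
/-!
Write `β j = x - α j y`. Since `|β i₀|` is the smallest factor, `|β i₀| ^ n ≤ |F(x, y)| ≤ K`, so
`|β i₀| ≤ K ^ (1/n) ≤ ε A |y|`. For `j ≠ i₀` the identity `β i₀ - β j = (α j - α i₀) y` then gives
`|β j| ≥ (1 - ε) |α j - α i₀| |y|`, and dividing `|F(x, y)| = |β i₀| ∏_{j ≠ i₀} |β j| ≤ K` by these
lower bounds yields the claim.
-/

open Finset

lemma pow_card_le_prod_of_le {ι : Type*} [Fintype ι] {f : ι → ℝ} {i₀ : ι}
    (h₀ : 0 ≤ f i₀) (hmin : ∀ j, f i₀ ≤ f j) : f i₀ ^ Fintype.card ι ≤ ∏ j, f j := by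
  rw [← card_univ, ← prod_const]
  exact prod_le_prod (fun _ _ => h₀) fun j _ => hmin j

lemma le_rpow_one_div_of_pow_le {a K : ℝ} {n : ℕ} (hn : n ≠ 0) (ha : 0 ≤ a) (hK : 0 ≤ K)
    (h : a ^ n ≤ K) : a ≤ K ^ ((1 : ℝ) / n) := by
  rwa [one_div, Real.le_rpow_inv_iff_of_pos ha hK (by positivity), Real.rpow_natCast]

lemma le_div_prod_erase_of_prod_le {ι : Type*} [Fintype ι] [DecidableEq ι] {f g : ι → ℝ}
    {i₀ : ι} {K : ℝ} (hf : ∀ j, 0 ≤ f j) (hg : ∀ j ∈ univ.erase i₀, 0 < g j)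
    (hgf : ∀ j ∈ univ.erase i₀, g j ≤ f j) (hK : ∏ j, f j ≤ K) :
    f i₀ ≤ K / ∏ j ∈ univ.erase i₀, g j := by
  rw [le_div_iff₀ (prod_pos hg)]
  calc f i₀ * ∏ j ∈ univ.erase i₀, g j
      ≤ f i₀ * ∏ j ∈ univ.erase i₀, f j :=
        mul_le_mul_of_nonneg_left (prod_le_prod (fun j hj => (hg j hj).le) hgf) (hf i₀)
    _ = ∏ j, f j := mul_prod_erase univ f (mem_univ i₀)
    _ ≤ K := hK

lemma norm_sub_mul_le_add {𝕜 : Type*} [NormedField 𝕜] (x y a b : 𝕜) :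
    ‖a - b‖ * ‖y‖ ≤ ‖x - a * y‖ + ‖x - b * y‖ := by
  rw [← norm_mul, show (a - b) * y = (x - b * y) - (x - a * y) by ring, add_comm]
  exact norm_sub_le _ _

lemma one_sub_mul_le_norm_sub_mul {𝕜 : Type*} [NormedField 𝕜] {x y a b : 𝕜} {ε : ℝ}
    (h : ‖x - b * y‖ ≤ ε * ‖a - b‖ * ‖y‖) : (1 - ε) * ‖a - b‖ * ‖y‖ ≤ ‖x - a * y‖ := by
  linarith [norm_sub_mul_le_add x y a b]

theorem stmt3_general (n : ℕ) (α : Fin n → ℝ) (hα : Function.Injective α)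
    (K ε A c : ℝ) (hK : 1 ≤ K) (hε : 0 < ε) (hε1 : ε < 1)
    (hA : IsLeast {r : ℝ | ∃ i j : Fin n, i ≠ j ∧ r = |α i - α j|} A)
    (x y : ℂ) (hF : ‖∏ j, (x - (α j : ℂ) * y)‖ ≤ K)
    (i₀ : Fin n)
    (hmin : ∀ j, ‖x - (α i₀ : ℂ) * y‖ ≤ ‖x - (α j : ℂ) * y‖)
    (hy : K ^ ((1 : ℝ) / n) / (ε * A) ≤ ‖y‖)
    (hc : c = K / ((1 - ε) ^ (n - 1) * ∏ j ∈ univ.erase i₀, |α j - α i₀|)) :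
    ‖x - (α i₀ : ℂ) * y‖ ≤ c / ‖y‖ ^ (n - 1) := by
  set β : Fin n → ℝ := fun j => ‖x - (α j : ℂ) * y‖
  replace hF : ∏ j, β j ≤ K := by rwa [norm_prod] at hF
  have hA0 : 0 < A := by
    obtain ⟨i, j, hij, rfl⟩ := hA.1
    exact abs_pos.mpr (sub_ne_zero.mpr (hα.ne hij))
  have hroot : 0 < K ^ ((1 : ℝ) / n) := Real.rpow_pos_of_pos (by linarith) _
  have hy0 : 0 < ‖y‖ := (div_pos hroot (mul_pos hε hA0)).trans_le hy
  have hsmall : ‖x - (α i₀ : ℂ) * y‖ ≤ ε * A * ‖y‖ := by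
    rw [div_le_iff₀ (mul_pos hε hA0), mul_comm ‖y‖] at hy
    refine (le_rpow_one_div_of_pow_le (Fin.pos i₀).ne' (norm_nonneg _) (by linarith) ?_).trans hy
    simpa using (pow_card_le_prod_of_le (f := β) (norm_nonneg _) hmin).trans hF
  have hlow : ∀ j ∈ univ.erase i₀, (1 - ε) * |α j - α i₀| * ‖y‖ ≤ ‖x - (α j : ℂ) * y‖ := by
    intro j hj
    have hdist : ‖(α j : ℂ) - α i₀‖ = |α j - α i₀| := by
      rw [← Complex.ofReal_sub, Complex.norm_real, Real.norm_eq_abs]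
    have hclose : ‖x - (α i₀ : ℂ) * y‖ ≤ ε * ‖(α j : ℂ) - α i₀‖ * ‖y‖ := by
      rw [hdist]
      exact hsmall.trans (by gcongr; exact hA.2 ⟨j, i₀, ne_of_mem_erase hj, rfl⟩)
    simpa only [hdist] using one_sub_mul_le_norm_sub_mul hclose
  have hpos : ∀ j ∈ univ.erase i₀, 0 < (1 - ε) * |α j - α i₀| * ‖y‖ := fun j hj => by
    have : 0 < |α j - α i₀| := abs_pos.mpr (sub_ne_zero.mpr (hα.ne (ne_of_mem_erase hj)))
    have : 0 < 1 - ε := by linarith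
    positivity
  calc ‖x - (α i₀ : ℂ) * y‖
      ≤ K / ∏ j ∈ univ.erase i₀, (1 - ε) * |α j - α i₀| * ‖y‖ :=
        le_div_prod_erase_of_prod_le (f := β) (fun _ => norm_nonneg _) hpos hlow hF
    _ = c / ‖y‖ ^ (n - 1) := by
        simp only [hc, prod_mul_distrib, prod_const, card_erase_of_mem (mem_univ i₀), card_univ,
          Fintype.card_fin, div_div]

theorem stmt3 (n : ℕ) (hn : 3 ≤ n) (α : Fin n → ℝ) (hα : Function.Injective α)
    (K ε A c : ℝ) (hK : 1 ≤ K) (hε : 0 < ε) (hε1 : ε < 1)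
    (hA : IsLeast {r : ℝ | ∃ i j : Fin n, i ≠ j ∧ r = |α i - α j|} A)
    (x y : ℂ) (hF : ‖∏ j, (x - (α j : ℂ) * y)‖ ≤ K)
    (i₀ : Fin n)
    (hmin : ∀ j, ‖x - (α i₀ : ℂ) * y‖ ≤ ‖x - (α j : ℂ) * y‖)
    (hy : K ^ ((1 : ℝ) / n) / (ε * A) ≤ ‖y‖)
    (hc : c = K / ((1 - ε) ^ (n - 1) * ∏ j ∈ univ.erase i₀, |α j - α i₀|)) :
    ‖x - (α i₀ : ℂ) * y‖ ≤ c / ‖y‖ ^ (n - 1) :=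
  stmt3_general n α hα K ε A c hK hε hε1 hA x y hF i₀ hmin hy hc
end

section
/- The polynomial f(x) = x⁴ − 9x³ − 21x² + 88x + 48 is irreducible over ℚ and has four distinct real roots. -/
/-!
Modulo 11 the quartic has no root and is not a product of two monic quadratics (a finite
check), so it is irreducible over `𝔽₁₁`. Being monic, it is then irreducible over `ℤ`, hence over
`ℚ` by Gauss's lemma. Its real roots are separated by the sign changes on `[-4, -3]`, `[-1, 0]`,
`[2, 3]` and `[10, 11]`.
-/

open Polynomial

namespace Polynomial

variable {R : Type*} [CommRing R]

theorem Monic.eq_X_sq_add_C_mul_X_add_C {q : R[X]} (hm : q.Monic) (hd : q.natDegree = 2) :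
    q = X ^ 2 + C (q.coeff 1) * X + C (q.coeff 0) := by
  have h2 : q.coeff 2 = 1 := hd ▸ hm.coeff_natDegree
  conv_lhs => rw [q.as_sum_range_C_mul_X_pow, hd]
  simp only [Finset.sum_range_succ, Finset.range_one, Finset.sum_singleton, pow_zero, mul_one,
    pow_one, h2, map_one, one_mul]
  ring

theorem Monic.irreducible_of_natDegree_eq_four [IsDomain R] {p : R[X]} (hm : p.Monic)
    (hd : p.natDegree = 4) (hroot : ∀ x, ¬ p.IsRoot x)
    (hquad : ∀ a b c d : R, a + c = p.coeff 3 → b + d + a * c = p.coeff 2 →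
      a * d + b * c = p.coeff 1 → b * d = p.coeff 0 → False) :
    Irreducible p := by
  have hp1 : p ≠ 1 := by rintro rfl; simp at hd
  rw [hm.irreducible_iff_lt_natDegree_lt hp1, hd]
  rintro q hq hqd ⟨h, rfl⟩
  obtain hq1 | hq2 : q.natDegree = 1 ∨ q.natDegree = 2 := by rw [Finset.mem_Ioc] at hqd; omega
  · apply hroot (-q.coeff 0)
    rw [← dvd_iff_isRoot, C_neg, sub_neg_eq_add, ← hq.eq_X_add_C hq1]
    exact dvd_mul_right q h
  · have hh : h.Monic := hq.of_mul_monic_left hm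
    have hh2 : h.natDegree = 2 := by rw [hq.natDegree_mul hh] at hd; omega
    set a := q.coeff 1
    set b := q.coeff 0
    set c := h.coeff 1
    set d := h.coeff 0
    have hprod : q * h = X ^ 4 + C (a + c) * X ^ 3 + C (b + d + a * c) * X ^ 2
        + C (a * d + b * c) * X + C (b * d) := by
      rw [hq.eq_X_sq_add_C_mul_X_add_C hq2, hh.eq_X_sq_add_C_mul_X_add_C hh2]
      simp only [map_add, map_mul]
      ring
    apply hquad a b c d <;> simp [hprod, coeff_X, coeff_C, -map_add, -map_mul]

end Polynomial

instance fact_prime_eleven : Fact (Nat.Prime 11) := ⟨by norm_num⟩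

theorem irreducible_quartic_zmod_eleven :
    Irreducible (X ^ 4 - 9 * X ^ 3 - 21 * X ^ 2 + 88 * X + 48 : (ZMod 11)[X]) := by
  have no_root : ∀ x : ZMod 11, x ^ 4 - 9 * x ^ 3 - 21 * x ^ 2 + 88 * x + 48 ≠ 0 := by decide
  have no_quadratic_factor : ∀ a b c d : ZMod 11, a + c = -9 → b + d + a * c = -21 →
      a * d + b * c = 88 → b * d = 48 → False := by decide
  apply Monic.irreducible_of_natDegree_eq_four (by monicity!) (by compute_degree!)
  · simpa [IsRoot] using no_root
  · simpa [coeff_X] using no_quadratic_factor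

theorem irreducible_quartic_rat :
    Irreducible (X ^ 4 - 9 * X ^ 3 - 21 * X ^ 2 + 88 * X + 48 : ℚ[X]) := by
  let f : ℤ[X] := X ^ 4 - 9 * X ^ 3 - 21 * X ^ 2 + 88 * X + 48
  have hf : f.Monic := by unfold f; monicity!
  have hf11 : Irreducible (f.map (Int.castRingHom (ZMod 11))) := by
    simpa [f] using irreducible_quartic_zmod_eleven
  have hfZ : Irreducible f := hf.irreducible_of_irreducible_map _ f hf11
  simpa [f] using (IsPrimitive.Int.irreducible_iff_irreducible_map_cast hf.isPrimitive).mp hfZ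

theorem exists_strictMono_roots_quartic : ∃ r : Fin 4 → ℝ, StrictMono r ∧
    ∀ i, (r i) ^ 4 - 9 * (r i) ^ 3 - 21 * (r i) ^ 2 + 88 * (r i) + 48 = 0 := by
  let F : ℝ → ℝ := fun x ↦ x ^ 4 - 9 * x ^ 3 - 21 * x ^ 2 + 88 * x + 48
  have hF : Continuous F := by fun_prop
  obtain ⟨r₀, ⟨-, h₀⟩, hr₀⟩ := intermediate_value_Ioo' (by norm_num : (-4 : ℝ) ≤ -3)
    hF.continuousOn (show (0 : ℝ) ∈ Set.Ioo (F (-3)) (F (-4)) by norm_num [F])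
  obtain ⟨r₁, ⟨h₁, h₁'⟩, hr₁⟩ := intermediate_value_Ioo (by norm_num : (-1 : ℝ) ≤ 0)
    hF.continuousOn (show (0 : ℝ) ∈ Set.Ioo (F (-1)) (F 0) by norm_num [F])
  obtain ⟨r₂, ⟨h₂, h₂'⟩, hr₂⟩ := intermediate_value_Ioo' (by norm_num : (2 : ℝ) ≤ 3)
    hF.continuousOn (show (0 : ℝ) ∈ Set.Ioo (F 3) (F 2) by norm_num [F])
  obtain ⟨r₃, ⟨h₃, -⟩, hr₃⟩ := intermediate_value_Ioo (by norm_num : (10 : ℝ) ≤ 11)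
    hF.continuousOn (show (0 : ℝ) ∈ Set.Ioo (F 10) (F 11) by norm_num [F])
  refine ⟨![r₀, r₁, r₂, r₃], Fin.strictMono_iff_lt_succ.mpr fun i ↦ ?_, fun i ↦ ?_⟩
  · fin_cases i <;> simp <;> linarith
  · fin_cases i <;> assumption

theorem stmt12 :
    Irreducible (X ^ 4 - 9 * X ^ 3 - 21 * X ^ 2 + 88 * X + 48 : ℚ[X]) ∧
      ∃ r : Fin 4 → ℝ, Function.Injective r ∧
        ∀ i, (r i) ^ 4 - 9 * (r i) ^ 3 - 21 * (r i) ^ 2 + 88 * (r i) + 48 = 0 := by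
  obtain ⟨r, hr, hroots⟩ := exists_strictMono_roots_quartic
  exact ⟨irreducible_quartic_rat, r, hr.injective, hroots⟩
end

section
/- Let m ≡ 1, 2 mod 4 be squarefree, F(x,y) = ∏(x − α_j y) a monic integer binary form of degree n ≥ 3 with distinct real roots, K ≥ 1, 0 < ε < 1, and set A = min_{i≠j}|α_i−α_j|, B = min_i ∏_{j≠i}|α_j−α_i|, C = max{K/((1−ε)^{n−1}B), 1}, C₂ = max{K^{1/n}/(εA), C^{1/(n−2)}}. If x = x₁+x₂·i√m, y = y₁+y₂·i√m with x₁,x₂,y₁,y₂ ∈ ℤ satisfy |F(x,y)| ≤ K and |y| > C₂, then x₂y₁ = x₁y₂. -/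
/-!
Among the factors `|x - α_j y|` of `|F(x, y)| ≤ K`, one, say `j = i`, is at most
`K^(1/n) ≤ εA|y|`. By the triangle inequality every other factor is then at least
`(1 - ε)|α_j - α_i||y|`, so `|x - α_i y| |y| < 1` as soon as `|y|^(n-2) > C`.
As `α_i` is real, `Im(x ȳ) = Im((x - α_i y) ȳ)` has absolute value below `1`; but
`Im(x ȳ) = (x₂y₁ - x₁y₂)√m` is an integer multiple of `√m ≥ 1`, so it vanishes.
-/

open Finset

lemma exists_le_rpow_of_prod_le {ι : Type*} [Fintype ι] [Nonempty ι] (r : ι → ℝ) {K : ℝ}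
    (hK : 0 < K) (h : ∏ i, r i ≤ K) : ∃ i, r i ≤ K ^ ((1 : ℝ) / Fintype.card ι) := by
  by_contra! hlt
  have hcard : (Fintype.card ι : ℝ) ≠ 0 := by simp
  have : K < ∏ i, r i := calc
    K = ∏ _i : ι, K ^ ((1 : ℝ) / Fintype.card ι) := by
      rw [prod_const, card_univ, ← Real.rpow_natCast, ← Real.rpow_mul hK.le,
        one_div_mul_cancel hcard, Real.rpow_one]
    _ < ∏ i, r i :=
      prod_lt_prod_of_nonempty (fun _ _ => by positivity) (fun i _ => hlt i) univ_nonempty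
  linarith

lemma abs_sub_mul_norm_le (x y : ℂ) (a b : ℝ) :
    |a - b| * ‖y‖ ≤ ‖x - a * y‖ + ‖x - b * y‖ := calc
  |a - b| * ‖y‖ = ‖(x - b * y) - (x - a * y)‖ := by
    rw [show (x - b * y) - (x - a * y) = ((a - b : ℝ) : ℂ) * y by push_cast; ring, norm_mul,
      Complex.norm_real, Real.norm_eq_abs]
  _ ≤ ‖x - b * y‖ + ‖x - a * y‖ := norm_sub_le _ _
  _ = ‖x - a * y‖ + ‖x - b * y‖ := add_comm _ _

lemma one_sub_mul_abs_sub_mul_norm_le (x y : ℂ) {a b ε : ℝ}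
    (h : ‖x - b * y‖ ≤ ε * |a - b| * ‖y‖) : (1 - ε) * |a - b| * ‖y‖ ≤ ‖x - a * y‖ := by
  linarith [abs_sub_mul_norm_le x y a b]

lemma prod_erase_norm_sub_mul_ge {ι : Type*} [Fintype ι] [DecidableEq ι] (α : ι → ℝ) (x y : ℂ)
    {ε A : ℝ} (hε : 0 ≤ ε) (hε1 : ε ≤ 1) (i : ι) (hA : ∀ j ≠ i, A ≤ |α j - α i|)
    (hi : ‖x - α i * y‖ ≤ ε * A * ‖y‖) :
    (1 - ε) ^ (Fintype.card ι - 1) * (∏ j ∈ univ.erase i, |α j - α i|) *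
      ‖y‖ ^ (Fintype.card ι - 1) ≤ ∏ j ∈ univ.erase i, ‖x - α j * y‖ := by
  have hcard : #(univ.erase i) = Fintype.card ι - 1 := by
    rw [card_erase_of_mem (mem_univ i), card_univ]
  rw [← hcard, ← prod_const, ← prod_const, ← prod_mul_distrib, ← prod_mul_distrib]
  refine prod_le_prod (fun j _ => by have := sub_nonneg.2 hε1; positivity) fun j hj => ?_
  refine one_sub_mul_abs_sub_mul_norm_le x y (hi.trans ?_)
  have := hA j (ne_of_mem_erase hj)
  gcongr

lemma mul_lt_one_of_mul_pow_succ_le {r t D C K : ℝ} {k : ℕ} (ht : 0 < t) (hD : 0 < D)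
    (h : r * (D * t ^ (k + 1)) ≤ K) (hK : K ≤ C * D) (hC : C < t ^ k) : r * t < 1 := by
  have : r * t * (D * t ^ k) < 1 * (D * t ^ k) := calc
    r * t * (D * t ^ k) = r * (D * t ^ (k + 1)) := by ring
    _ < t ^ k * D := h.trans_lt (hK.trans_lt (by gcongr))
    _ = 1 * (D * t ^ k) := by ring
  exact lt_of_mul_lt_mul_right this (by positivity)

lemma im_mul_conj_eq (m : ℝ) (x₁ x₂ y₁ y₂ : ℤ) :
    (((x₁ : ℂ) + x₂ * (Complex.I * m)) * (starRingEnd ℂ) ((y₁ : ℂ) + y₂ * (Complex.I * m))).im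
      = ((x₂ * y₁ - x₁ * y₂ : ℤ) : ℝ) * m := by
  simp only [map_add, map_intCast, map_mul, Complex.conj_I, Complex.conj_ofReal, neg_mul, mul_neg,
    Complex.mul_im, Complex.add_re, Complex.intCast_re, Complex.mul_re, Complex.I_re,
    Complex.ofReal_re, zero_mul, Complex.I_im, Complex.ofReal_im, mul_zero, sub_self,
    Complex.intCast_im, one_mul, zero_add, add_zero, Complex.add_im, Complex.neg_im,
    Complex.neg_re, neg_zero, Int.cast_sub, Int.cast_mul]
  ring

lemma abs_im_mul_conj_le (x y : ℂ) (a : ℝ) :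
    |(x * (starRingEnd ℂ) y).im| ≤ ‖x - a * y‖ * ‖y‖ := by
  have : (x * (starRingEnd ℂ) y).im = ((x - a * y) * (starRingEnd ℂ) y).im := by
    rw [sub_mul, Complex.sub_im, mul_assoc, Complex.mul_conj, ← Complex.ofReal_mul,
      Complex.ofReal_im, sub_zero]
  rw [this, ← Complex.norm_conj y, ← norm_mul]
  exact Complex.abs_im_le_norm _

lemma lt_pow_of_rpow_inv_lt {C t : ℝ} {k : ℕ} (hC : 0 ≤ C) (hk : k ≠ 0)
    (h : C ^ ((k : ℝ)⁻¹) < t) : C < t ^ k := by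
  have ht : 0 ≤ t := (by positivity : 0 ≤ C ^ ((k : ℝ)⁻¹)).trans h.le
  rwa [Real.rpow_inv_lt_iff_of_pos hC ht (by positivity), Real.rpow_natCast] at h

lemma exists_norm_sub_mul_norm_lt_one {n : ℕ} (hn : 2 ≤ n) (α : Fin n → ℝ)
    {K ε A B C : ℝ} (hK : 0 < K) (hε : 0 < ε) (hε1 : ε < 1) (hA0 : 0 < A) (hB0 : 0 < B)
    (hA : ∀ i j, i ≠ j → A ≤ |α i - α j|) (hB : ∀ i, B ≤ ∏ j ∈ univ.erase i, |α j - α i|)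
    (hC : K / ((1 - ε) ^ (n - 1) * B) ≤ C) (x y : ℂ) (hF : ∏ j, ‖x - α j * y‖ ≤ K)
    (hyK : K ^ ((1 : ℝ) / n) / (ε * A) < ‖y‖) (hyC : C < ‖y‖ ^ (n - 2)) :
    ∃ i, ‖x - α i * y‖ * ‖y‖ < 1 := by
  have : Nonempty (Fin n) := ⟨⟨0, by omega⟩⟩
  obtain ⟨i, hi⟩ := exists_le_rpow_of_prod_le _ hK hF
  rw [Fintype.card_fin] at hi
  have hy : 0 < ‖y‖ := lt_of_le_of_lt (by positivity) hyK
  have hclose : ‖x - α i * y‖ ≤ ε * A * ‖y‖ :=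
    hi.trans ((div_lt_iff₀' (by positivity)).1 hyK).le
  have hD : 0 < (1 - ε) ^ (n - 1) * B := by have := sub_pos.2 hε1; positivity
  have hfar := prod_erase_norm_sub_mul_ge α x y hε.le hε1.le i (fun j hj => hA j i hj) hclose
  rw [Fintype.card_fin] at hfar
  refine ⟨i, mul_lt_one_of_mul_pow_succ_le hy hD ?_ ((div_le_iff₀ hD).1 hC) hyC⟩
  calc ‖x - α i * y‖ * ((1 - ε) ^ (n - 1) * B * ‖y‖ ^ (n - 2 + 1))
      ≤ ‖x - α i * y‖ * ∏ j ∈ univ.erase i, ‖x - α j * y‖ := by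
        rw [show n - 2 + 1 = n - 1 by omega]
        gcongr
        have := sub_nonneg.2 hε1.le
        exact hfar.trans' (by gcongr; exact hB i)
    _ = ∏ j, ‖x - α j * y‖ := mul_prod_erase univ (fun j => ‖x - α j * y‖) (mem_univ i)
    _ ≤ K := hF

lemma mul_eq_mul_of_norm_sub_mul_norm_lt_one {m : ℤ} (hm : 1 ≤ m) {x₁ x₂ y₁ y₂ : ℤ} {x y : ℂ}
    (hx : x = (x₁ : ℂ) + (x₂ : ℂ) * (Complex.I * Real.sqrt m))
    (hy : y = (y₁ : ℂ) + (y₂ : ℂ) * (Complex.I * Real.sqrt m))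
    (a : ℝ) (h : ‖x - a * y‖ * ‖y‖ < 1) : x₂ * y₁ = x₁ * y₂ := by
  have hsqrt : 1 ≤ Real.sqrt m := Real.one_le_sqrt.2 (by exact_mod_cast hm)
  have hcross := (abs_im_mul_conj_le x y a).trans_lt h
  rw [hx, hy, im_mul_conj_eq, abs_mul, abs_of_nonneg (Real.sqrt_nonneg _)] at hcross
  have : |x₂ * y₁ - x₁ * y₂| < 1 := by
    rw [← Int.cast_lt (R := ℝ), Int.cast_abs, Int.cast_one]
    nlinarith [abs_nonneg ((x₂ * y₁ - x₁ * y₂ : ℤ) : ℝ)]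
  linarith [Int.abs_lt_one_iff.1 this]

theorem stmt16_general (m : ℤ) (hm : 1 < m)
    (n : ℕ) (hn : 3 ≤ n) (α : Fin n → ℝ) (hα : Function.Injective α)
    (K ε A B C C₂ : ℝ) (hK : 1 ≤ K) (hε : 0 < ε) (hε1 : ε < 1)
    (hA : IsLeast {r : ℝ | ∃ i j : Fin n, i ≠ j ∧ r = |α i - α j|} A)
    (hB : IsLeast {r : ℝ | ∃ i : Fin n, r = ∏ j ∈ univ.erase i, |α j - α i|} B)
    (hC : C = max (K / ((1 - ε) ^ (n - 1) * B)) 1)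
    (hC₂ : C₂ = max (K ^ ((1 : ℝ) / n) / (ε * A)) (C ^ ((1 : ℝ) / ((n : ℝ) - 2))))
    (x₁ x₂ y₁ y₂ : ℤ) (x y : ℂ)
    (hx : x = (x₁ : ℂ) + (x₂ : ℂ) * (Complex.I * Real.sqrt m))
    (hy : y = (y₁ : ℂ) + (y₂ : ℂ) * (Complex.I * Real.sqrt m))
    (hF : ‖∏ j, (x - (α j : ℂ) * y)‖ ≤ K)
    (hylarge : C₂ < ‖y‖) :
    x₂ * y₁ = x₁ * y₂ := by
  have hA0 : 0 < A := by
    obtain ⟨i, j, hij, rfl⟩ := hA.1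
    exact abs_pos.2 (sub_ne_zero.2 (hα.ne hij))
  have hB0 : 0 < B := by
    obtain ⟨i, rfl⟩ := hB.1
    exact prod_pos fun j hj => abs_pos.2 (sub_ne_zero.2 (hα.ne (ne_of_mem_erase hj)))
  rw [hC₂, max_lt_iff] at hylarge
  obtain ⟨hyK, hyCroot⟩ := hylarge
  have hyC : C < ‖y‖ ^ (n - 2) := by
    refine lt_pow_of_rpow_inv_lt (hC ▸ zero_le_one.trans (le_max_right _ _)) (by omega) ?_
    rwa [Nat.cast_sub (by omega), Nat.cast_two, ← one_div]
  obtain ⟨i, hi⟩ := exists_norm_sub_mul_norm_lt_one (by omega) α (by linarith) hε hε1 hA0 hB0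
    (fun i j hij => hA.2 ⟨i, j, hij, rfl⟩) (fun i => hB.2 ⟨i, rfl⟩) (hC ▸ le_max_left _ _)
    x y (by rwa [norm_prod] at hF) hyK hyC
  exact mul_eq_mul_of_norm_sub_mul_norm_lt_one hm.le hx hy (α i) hi

theorem stmt16 (m : ℤ) (hm : 1 < m) (hsf : Squarefree m)
    (hmod : m % 4 = 1 ∨ m % 4 = 2)
    (n : ℕ) (hn : 3 ≤ n) (α : Fin n → ℝ) (hα : Function.Injective α)
    (hint : ∀ k : ℕ, ∃ z : ℤ,
      ((∏ j, (Polynomial.X - Polynomial.C (α j)) : Polynomial ℝ)).coeff k = z)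
    (K ε A B C C₂ : ℝ) (hK : 1 ≤ K) (hε : 0 < ε) (hε1 : ε < 1)
    (hA : IsLeast {r : ℝ | ∃ i j : Fin n, i ≠ j ∧ r = |α i - α j|} A)
    (hB : IsLeast {r : ℝ | ∃ i : Fin n, r = ∏ j ∈ univ.erase i, |α j - α i|} B)
    (hC : C = max (K / ((1 - ε) ^ (n - 1) * B)) 1)
    (hC₂ : C₂ = max (K ^ ((1 : ℝ) / n) / (ε * A)) (C ^ ((1 : ℝ) / ((n : ℝ) - 2))))
    (x₁ x₂ y₁ y₂ : ℤ) (x y : ℂ)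
    (hx : x = (x₁ : ℂ) + (x₂ : ℂ) * (Complex.I * Real.sqrt m))
    (hy : y = (y₁ : ℂ) + (y₂ : ℂ) * (Complex.I * Real.sqrt m))
    (hF : ‖∏ j, (x - (α j : ℂ) * y)‖ ≤ K)
    (hylarge : C₂ < ‖y‖) :
    x₂ * y₁ = x₁ * y₂ :=
  stmt16_general m hm n hn α hα K ε A B C C₂ hK hε hε1 hA hB hC hC₂ x₁ x₂ y₁ y₂ x y hx hy hF hylarge
end
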